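/- Let $J \in \mathbb{R}^{n\times p}$, $\alpha \in \mathbb{R}^n$ in the column space of $J$, and $\lambda > 0$. Let $\mu_{\min}$ denote the smallest nonzero eigenvalue of $\frac{1}{n}JJ^\top$ (assume $J \ne 0$). Suppose for each eigenvalue $\mu_i$ of $\frac{1}{n}JJ^\top$ with orthonormal eigenvector basis, the quantities $\tilde g_i$ (components of $g = \frac{1}{n}J^\top \alpha$ in the corresponding eigenbasis of $\frac{1}{n}J^\top J$) satisfy $\tilde g_i^2 \le C_3 \mu_i^{1+\varepsilon}$ for constants $C_3 > 0$, $0 < \varepsilon < 1$. Then $o_\lambda := \frac{1}{n}\alpha^\top(\frac{1}{n}JJ^\top + \lambda I_n)^{-1}\alpha \le \frac{C_3 n}{\mu_{\min}^{1-\varepsilon}}$. -/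

import Mathlib

/-!
With the SVD `J = U Σ Vᵀ`, the regularised matrix is `(1/n) J Jᵀ + λ I = U diag(μᵢ + λ) Uᵀ`,
so `o_λ = (1/n) ∑ wᵢ² / (μᵢ + λ)` with `w = Uᵀ α`. As `α = J β`, `w = Σ Vᵀ β` vanishes wherever
`σᵢ = 0`; elsewhere `(Vᵀ g)ᵢ = σᵢ wᵢ / n`, so the `i`-th term equals `g̃ᵢ² / (μᵢ (μᵢ + λ))`, which
is at most `g̃ᵢ² / μᵢ² ≤ C₃ μᵢ^(ε - 1) ≤ C₃ μ_min^(ε - 1)`. There are `n` terms.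
-/

open Matrix Finset

namespace Matrix

def rectDiagonal {R : Type*} [Zero R] (m k : ℕ) (σ : ℕ → R) : Matrix (Fin m) (Fin k) R :=
  of fun i j => if (i : ℕ) = j then σ i else 0

theorem transpose_rectDiagonal {R : Type*} [Zero R] {m k : ℕ} (σ : ℕ → R) :
    (rectDiagonal m k σ)ᵀ = rectDiagonal k m σ := by
  ext i j
  simp only [transpose_apply, rectDiagonal, of_apply]
  split_ifs with h h' h' <;> simp_all

section rectDiagonal

variable {R : Type*} [CommSemiring R] {m k : ℕ} (σ : ℕ → R)

theorem rectDiagonal_mulVec (x : Fin k → R) (i : Fin m) :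
    (rectDiagonal m k σ *ᵥ x) i = if h : (i : ℕ) < k then σ i * x ⟨i, h⟩ else 0 := by
  simp only [mulVec, dotProduct, rectDiagonal, of_apply, ite_mul, zero_mul]
  split_ifs with h
  · rw [sum_eq_single ⟨i, h⟩ (fun j _ hj => if_neg fun hij => hj (Fin.ext hij.symm))
      (fun h' => absurd (mem_univ _) h'), if_pos rfl]
  · exact sum_eq_zero fun j _ => if_neg fun hij : (i : ℕ) = j => h (hij ▸ j.isLt)

theorem rectDiagonal_mul_transpose (hσ : ∀ i, k ≤ i → σ i = 0) :
    rectDiagonal m k σ * (rectDiagonal m k σ)ᵀ = diagonal fun i : Fin m => σ i ^ 2 := by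
  ext i j
  change (rectDiagonal m k σ *ᵥ fun l => (rectDiagonal m k σ)ᵀ l j) i = _
  rw [rectDiagonal_mulVec, diagonal_apply]
  split_ifs with hk hij hij
  · simp [hij, rectDiagonal, sq]
  · simp [rectDiagonal, Fin.val_ne_of_ne (Ne.symm hij)]
  · subst hij
    simp [hσ i (not_lt.mp hk)]
  · rfl

end rectDiagonal

theorem inv_conj_diagonal {K : Type*} [Field K] {m : Type*} [Fintype m] [DecidableEq m]
    {U : Matrix m m K} (hU : U ∈ orthogonalGroup m K) {d : m → K} (hd : ∀ i, d i ≠ 0) :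
    (U * diagonal d * Uᵀ)⁻¹ = U * diagonal d⁻¹ * Uᵀ := by
  apply inv_eq_right_inv
  have hdd : diagonal d * diagonal d⁻¹ = 1 := by
    rw [diagonal_mul_diagonal, ← diagonal_one]
    exact congrArg diagonal (funext fun i => mul_inv_cancel₀ (hd i))
  calc U * diagonal d * Uᵀ * (U * diagonal d⁻¹ * Uᵀ)
      = U * (diagonal d * (Uᵀ * U) * diagonal d⁻¹) * Uᵀ := by simp only [Matrix.mul_assoc]
    _ = 1 := by
      rw [(mem_orthogonalGroup_iff' m K).mp hU, Matrix.mul_one, hdd, Matrix.mul_one,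
        (mem_orthogonalGroup_iff m K).mp hU]

section conj

variable {R : Type*} [CommRing R] {m : Type*} [Fintype m] [DecidableEq m] {U : Matrix m m R}

theorem smul_conj_add_smul_one (hU : U ∈ orthogonalGroup m R) (c l : R) (A : Matrix m m R) :
    c • (U * A * Uᵀ) + l • 1 = U * (c • A + l • 1) * Uᵀ := by
  rw [Matrix.mul_add, Matrix.add_mul, Matrix.mul_smul, Matrix.smul_mul, Matrix.mul_smul,
    Matrix.smul_mul, Matrix.mul_one, (mem_orthogonalGroup_iff m R).mp hU]

theorem dotProduct_conj_diagonal_mulVec (U : Matrix m m R) (d x : m → R) :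
    x ⬝ᵥ (U * diagonal d * Uᵀ) *ᵥ x = ∑ i, d i * (Uᵀ *ᵥ x) i ^ 2 := by
  rw [← mulVec_mulVec, ← mulVec_mulVec, dotProduct_mulVec, ← mulVec_transpose, dotProduct]
  refine sum_congr rfl fun i _ => ?_
  rw [mulVec_diagonal]
  ring

end conj

section svd

variable {R : Type*} [CommRing R] {m k : Type*} [Fintype m] [Fintype k] {U : Matrix m m R}
  {V : Matrix k k R} (S : Matrix m k R)

theorem svd_mul_transpose [DecidableEq k] (hV : V ∈ orthogonalGroup k R) :
    U * S * Vᵀ * (U * S * Vᵀ)ᵀ = U * (S * Sᵀ) * Uᵀ := by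
  rw [transpose_mul, transpose_mul, transpose_transpose]
  calc U * S * Vᵀ * (V * (Sᵀ * Uᵀ)) = U * (S * (Vᵀ * V) * Sᵀ) * Uᵀ := by
        simp only [Matrix.mul_assoc]
    _ = U * (S * Sᵀ) * Uᵀ := by rw [(mem_orthogonalGroup_iff' k R).mp hV, Matrix.mul_one]

theorem transpose_mulVec_svd_mulVec [DecidableEq m] (hU : U ∈ orthogonalGroup m R) (x : k → R) :
    Uᵀ *ᵥ (U * S * Vᵀ) *ᵥ x = S *ᵥ Vᵀ *ᵥ x := by
  rw [mulVec_mulVec, ← Matrix.mul_assoc, ← Matrix.mul_assoc, (mem_orthogonalGroup_iff' m R).mp hU,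
    Matrix.one_mul, mulVec_mulVec]

theorem transpose_mulVec_svd_transpose_mulVec [DecidableEq k] (hV : V ∈ orthogonalGroup k R)
    (y : m → R) :
    Vᵀ *ᵥ (U * S * Vᵀ)ᵀ *ᵥ y = Sᵀ *ᵥ Uᵀ *ᵥ y := by
  rw [transpose_mul, transpose_mul, transpose_transpose, mulVec_mulVec, ← Matrix.mul_assoc,
    (mem_orthogonalGroup_iff' k R).mp hV, Matrix.one_mul, mulVec_mulVec]

end svd

end Matrix

theorem sq_div_mul_add_le_div_rpow {μ lam C ε m x : ℝ} (hm : 0 < m) (hmμ : m ≤ μ)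
    (hlam : 0 ≤ lam) (hC : 0 ≤ C) (hε : ε ≤ 1) (hx : x ^ 2 ≤ C * μ ^ (1 + ε)) :
    x ^ 2 / (μ * (μ + lam)) ≤ C / m ^ (1 - ε) := by
  have hμ : 0 < μ := hm.trans_le hmμ
  have hpow : μ ^ (1 + ε) / (μ * μ) = (μ ^ (1 - ε))⁻¹ := by
    have hsq : μ * μ = μ ^ (1 + ε) * μ ^ (1 - ε) := by
      rw [← Real.rpow_add hμ, show 1 + ε + (1 - ε) = ((2 : ℕ) : ℝ) by push_cast; ring,
        Real.rpow_natCast, sq]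
    rw [hsq]
    field_simp
  calc x ^ 2 / (μ * (μ + lam)) ≤ C * μ ^ (1 + ε) / (μ * μ) := by gcongr; linarith
    _ = C / μ ^ (1 - ε) := by rw [mul_div_assoc, hpow, div_eq_mul_inv]
    _ ≤ C / m ^ (1 - ε) := by gcongr

theorem stmt_12_general {n p : ℕ} (J : Matrix (Fin n) (Fin p) ℝ)
    (α : Fin n → ℝ) (β : Fin p → ℝ) (hα : α = J.mulVec β)
    (lam : ℝ) (hlam : 0 < lam)
    -- SVD of `J`
    (U : Matrix (Fin n) (Fin n) ℝ) (V : Matrix (Fin p) (Fin p) ℝ)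
    (hU : U ∈ Matrix.orthogonalGroup (Fin n) ℝ)
    (hV : V ∈ Matrix.orthogonalGroup (Fin p) ℝ)
    (σ : ℕ → ℝ)
    (hσzero : ∀ i : ℕ, min n p ≤ i → σ i = 0)
    (Sig : Matrix (Fin n) (Fin p) ℝ)
    (hSig : ∀ i j, Sig i j = if (i : ℕ) = (j : ℕ) then σ i else 0)
    (hSVD : J = U * Sig * Vᵀ)
    -- eigenvalues of `(1/n)JJᵀ`
    (μ : Fin n → ℝ) (hμ : ∀ i : Fin n, μ i = σ (i : ℕ) ^ 2 / n)
    -- smallest nonzero eigenvalue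
    (μmin : ℝ) (hmem : ∃ i : Fin n, μ i = μmin ∧ μ i ≠ 0)
    (hmin : ∀ i : Fin n, μ i ≠ 0 → μmin ≤ μ i)
    -- components of `g = (1/n)Jᵀα` in the eigenbasis of `(1/n)JᵀJ`
    (g : Fin p → ℝ) (hg : g = (n : ℝ)⁻¹ • Jᵀ.mulVec α)
    (C₃ ε : ℝ) (hC₃ : 0 < C₃) (hε1 : ε < 1)
    (hgbound : ∀ i : Fin n, ∀ h : (i : ℕ) < p,
      (Vᵀ.mulVec g ⟨(i : ℕ), h⟩) ^ 2 ≤ C₃ * (μ i) ^ ((1 : ℝ) + ε)) :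
    (n : ℝ)⁻¹ *
        (α ⬝ᵥ (((n : ℝ)⁻¹ • (J * Jᵀ) +
          lam • (1 : Matrix (Fin n) (Fin n) ℝ))⁻¹).mulVec α)
      ≤ C₃ * n / μmin ^ ((1 : ℝ) - ε) := by
  have hSig' : Sig = rectDiagonal n p σ := ext hSig
  have hσp : ∀ i, p ≤ i → σ i = 0 := fun i hi => hσzero i (min_le_of_right_le hi)
  have hμ_nonneg : ∀ i, 0 ≤ μ i := fun i => hμ i ▸ by positivity
  have hM : (n : ℝ)⁻¹ • (J * Jᵀ) + lam • (1 : Matrix (Fin n) (Fin n) ℝ) =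
      U * diagonal (fun i => μ i + lam) * Uᵀ := by
    rw [hSVD, svd_mul_transpose _ hV, hSig', rectDiagonal_mul_transpose σ hσp,
      smul_conj_add_smul_one hU, smul_one_eq_diagonal, ← diagonal_smul, diagonal_add]
    congr
    funext i
    simp [hμ, div_eq_inv_mul]
  set w := Uᵀ *ᵥ α with hw
  have hw_zero : ∀ i : Fin n, σ i = 0 → w i = 0 := by
    intro i hi
    rw [hw, hα, hSVD, transpose_mulVec_svd_mulVec _ hU, hSig', rectDiagonal_mulVec]
    simp [hi]
  have hg_w : ∀ (i : Fin n) (h : (i : ℕ) < p), (Vᵀ *ᵥ g) ⟨i, h⟩ = (n : ℝ)⁻¹ * (σ i * w i) := by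
    intro i h
    rw [hg, mulVec_smul, hSVD, transpose_mulVec_svd_transpose_mulVec _ hV, hSig',
      transpose_rectDiagonal, Pi.smul_apply, rectDiagonal_mulVec, dif_pos i.isLt]
    rfl
  have hμmin : 0 < μmin := by
    obtain ⟨i, rfl, hi⟩ := hmem
    exact (hμ_nonneg i).lt_of_ne' hi
  have hterm : ∀ i, (n : ℝ)⁻¹ * ((μ i + lam)⁻¹ * w i ^ 2) ≤ C₃ / μmin ^ (1 - ε) := by
    intro i
    by_cases hσi : σ i = 0
    · rw [hw_zero i hσi, zero_pow two_ne_zero, mul_zero, mul_zero]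
      positivity
    have hn : (0 : ℝ) < n := by exact_mod_cast i.pos
    have hip : (i : ℕ) < p := not_le.mp fun h => hσi (hσp i h)
    have hμi : 0 < μ i := by rw [hμ]; positivity
    have hterm_eq : (n : ℝ)⁻¹ * ((μ i + lam)⁻¹ * w i ^ 2) =
        (Vᵀ *ᵥ g) ⟨i, hip⟩ ^ 2 / (μ i * (μ i + lam)) := by
      rw [hg_w, hμ]
      field_simp
    rw [hterm_eq]
    exact sq_div_mul_add_le_div_rpow hμmin (hmin i hμi.ne') hlam.le hC₃.le hε1.le (hgbound i hip)
  rw [hM, inv_conj_diagonal hU fun i => (add_pos_of_nonneg_of_pos (hμ_nonneg i) hlam).ne',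
    dotProduct_conj_diagonal_mulVec, mul_sum]
  calc _ ≤ ∑ _i : Fin n, C₃ / μmin ^ (1 - ε) := sum_le_sum fun i _ => hterm i
    _ = _ := by
      rw [sum_const, card_univ, Fintype.card_fin, nsmul_eq_mul]
      ring

/-- Bound `o_λ = (1/n)αᵀ((1/n)JJᵀ + λI)⁻¹α ≤ C₃ n / μ_min^{1-ε}` for `α` in the column
space of `J`, under the decay bound on the eigen-components of `g = (1/n)Jᵀα`. -/
theorem stmt_12 {n p : ℕ} (hn : 0 < n) (J : Matrix (Fin n) (Fin p) ℝ) (hJ : J ≠ 0)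
    (α : Fin n → ℝ) (β : Fin p → ℝ) (hα : α = J.mulVec β)
    (lam : ℝ) (hlam : 0 < lam)
    -- SVD of `J`
    (U : Matrix (Fin n) (Fin n) ℝ) (V : Matrix (Fin p) (Fin p) ℝ)
    (hU : U ∈ Matrix.orthogonalGroup (Fin n) ℝ)
    (hV : V ∈ Matrix.orthogonalGroup (Fin p) ℝ)
    (σ : ℕ → ℝ) (hσnonneg : ∀ i, 0 ≤ σ i)
    (hσzero : ∀ i : ℕ, min n p ≤ i → σ i = 0)
    (Sig : Matrix (Fin n) (Fin p) ℝ)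
    (hSig : ∀ i j, Sig i j = if (i : ℕ) = (j : ℕ) then σ i else 0)
    (hSVD : J = U * Sig * Vᵀ)
    -- eigenvalues of `(1/n)JJᵀ`
    (μ : Fin n → ℝ) (hμ : ∀ i : Fin n, μ i = σ (i : ℕ) ^ 2 / n)
    -- smallest nonzero eigenvalue
    (μmin : ℝ) (hmem : ∃ i : Fin n, μ i = μmin ∧ μ i ≠ 0)
    (hmin : ∀ i : Fin n, μ i ≠ 0 → μmin ≤ μ i)
    -- components of `g = (1/n)Jᵀα` in the eigenbasis of `(1/n)JᵀJ`
    (g : Fin p → ℝ) (hg : g = (n : ℝ)⁻¹ • Jᵀ.mulVec α)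
    (C₃ ε : ℝ) (hC₃ : 0 < C₃) (hε0 : 0 < ε) (hε1 : ε < 1)
    (hgbound : ∀ i : Fin n, ∀ h : (i : ℕ) < p,
      (Vᵀ.mulVec g ⟨(i : ℕ), h⟩) ^ 2 ≤ C₃ * (μ i) ^ ((1 : ℝ) + ε)) :
    (n : ℝ)⁻¹ *
        (α ⬝ᵥ (((n : ℝ)⁻¹ • (J * Jᵀ) +
          lam • (1 : Matrix (Fin n) (Fin n) ℝ))⁻¹).mulVec α)
      ≤ C₃ * n / μmin ^ ((1 : ℝ) - ε) :=
  stmt_12_general J α β hα lam hlam U V hU hV σ hσzero Sig hSig hSVD μ hμ μmin hmem hmin g hg C₃ ε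
    hC₃ hε1 hgbound
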